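/- arXiv:0805.4120 — 3 statements merged into one kernel-verified Lean document; each statement's English description precedes it below -/
import Mathlib

section
/- Every Laman graph on n ≥ 3 vertices has exactly 2n−3 edges, and after removing one fixed edge [v_1,v_2], the remaining edges can be oriented so that every vertex other than v_1 and v_2 has in-degree exactly 2, and v_1, v_2 have in-degree 0. -/
open scoped Classical

/-- Laman graphs, defined via the Henneberg construction: graphs (given by a
vertex set `V ⊆ ℕ` and an edge set `E` of unordered pairs) obtainable from a
triangle by Henneberg I and Henneberg II steps. -/
inductive Henneberg : Finset ℕ → Finset (Sym2 ℕ) → Prop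
  | triangle (a b c : ℕ) (hab : a ≠ b) (hac : a ≠ c) (hbc : b ≠ c) :
      Henneberg {a, b, c} {s(a, b), s(b, c), s(a, c)}
  | stepI (V : Finset ℕ) (E : Finset (Sym2 ℕ)) (hVE : Henneberg V E)
      (v u w : ℕ) (hv : v ∉ V) (hu : u ∈ V) (hw : w ∈ V) (huw : u ≠ w) :
      Henneberg (insert v V) (insert s(v, u) (insert s(v, w) E))
  | stepII (V : Finset ℕ) (E : Finset (Sym2 ℕ)) (hVE : Henneberg V E)
      (v a b c : ℕ) (hv : v ∉ V) (ha : a ∈ V) (hb : b ∈ V) (hc : c ∈ V)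
      (hab : a ≠ b) (hac : a ≠ c) (hbc : b ≠ c) (he : s(a, b) ∈ E) :
      Henneberg (insert v V) (insert s(v, a) (insert s(v, b) (insert s(v, c) (E.erase s(a, b)))))

/-!
Every Henneberg step preserves `#E + 3 = 2 * #V` and Laman sparsity: every vertex set `T`
spans at most `2 * #T - 3` edges, because the new vertex adds at most two edges net to any
`T` containing it. Once the edge `v₁v₂` is deleted, `T` spans at most `2 * #(T \ {v₁, v₂})`
edges. This is Hall's condition for sending each edge to a "slot" at one of its endpoints,
where each vertex other than `v₁`, `v₂` offers two slots and `v₁`, `v₂` offer none. The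
`2n - 4` remaining edges then fill all `2(n - 2)` slots, so every in-degree reaches its
capacity.
-/

open Finset

section

variable {α : Type*} [DecidableEq α]

theorem Finset.card_insert_inter_le (a : α) (s t : Finset α) :
    #(insert a s ∩ t) ≤ #(s ∩ t) + 1 :=
  (card_le_card (insert_inter_distrib s t a ▸ inter_subset_inter_left (subset_insert a t))).trans
    (card_insert_le a _)

theorem Finset.sum_ite_mem_eq_mul_card_sdiff (S T : Finset α) (c : ℕ) :
    ∑ v ∈ T, (if v ∈ S then 0 else c) = c * #(T \ S) := by
  rw [sum_ite, sum_const_zero, zero_add, sum_const, smul_eq_mul, filter_notMem_eq_sdiff, mul_comm]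

-- For `#T ≤ 1` the truncated bound `2 * #T - 3` is `0`.
theorem card_inter_sym2_le_of_card_le_two {E : Finset (Sym2 α)} (hE : ∀ e ∈ E, ¬ e.IsDiag)
    {T : Finset α} (hT : #T ≤ 2) : #(E ∩ T.sym2) ≤ 2 * #T - 3 := by
  obtain hT | hT := hT.lt_or_eq
  · suffices E ∩ T.sym2 = ∅ by simp [this]
    refine eq_empty_of_forall_notMem fun e he => ?_
    induction e using Sym2.ind with
    | _ x y =>
      obtain ⟨heE, hx, hy⟩ : s(x, y) ∈ E ∧ x ∈ T ∧ y ∈ T := by simpa using he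
      exact hE _ heE (Sym2.mk_isDiag_iff.2 (card_le_one.1 (by omega) x hx y hy))
  · obtain ⟨x, y, -, rfl⟩ := card_eq_two.1 hT
    have hsub : E ∩ ({x, y} : Finset α).sym2 ⊆ {s(x, y)} := by
      intro e he
      induction e using Sym2.ind with
      | _ p q =>
        have hpq := hE _ (mem_inter.1 he).1
        simp only [mem_inter, mk_mem_sym2_iff, mem_insert, mem_singleton,
          Sym2.mk_isDiag_iff] at he hpq ⊢
        grind
    simpa [hT] using card_le_card hsub

theorem card_inter_sym2_le_of_add_vertex {V : Finset α} {E E' : Finset (Sym2 α)} {v : α}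
    (hv : v ∉ V) (hEV : E ⊆ V.sym2) (hE : ∀ T : Finset α, #(E ∩ T.sym2) ≤ 2 * #T - 3)
    (hE' : ∀ e ∈ E', ¬ e.IsDiag)
    (hle : ∀ T : Finset α, #(E' ∩ T.sym2) ≤ #(E ∩ T.sym2) + 2)
    (hle_of_notMem : ∀ T : Finset α, v ∉ T → #(E' ∩ T.sym2) ≤ #(E ∩ T.sym2))
    (T : Finset α) : #(E' ∩ T.sym2) ≤ 2 * #T - 3 := by
  by_cases hT : #T ≤ 2
  · exact card_inter_sym2_le_of_card_le_two hE' hT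
  by_cases hvT : v ∈ T
  · have hspan : E ∩ T.sym2 = E ∩ (T ∩ V).sym2 := by
      ext e
      have := @hEV e
      simp only [mem_inter, mem_sym2_iff] at this ⊢
      grind
    have hcard : #(T ∩ V) < #T :=
      card_lt_card ⟨inter_subset_left, fun h => hv (mem_inter.1 (h hvT)).2⟩
    have hleT := hle T
    rw [hspan] at hleT
    have := hE (T ∩ V)
    omega
  · exact (hle_of_notMem T hvT).trans ((hE T).trans (by omega))

theorem card_erase_inter_sym2_le {E : Finset (Sym2 α)}
    (hE : ∀ T : Finset α, #(E ∩ T.sym2) ≤ 2 * #T - 3) {x y : α} (hxy : s(x, y) ∈ E)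
    (T : Finset α) : #(E.erase s(x, y) ∩ T.sym2) ≤ 2 * #(T \ {x, y}) := by
  have hT := card_sdiff_add_card_inter T {x, y}
  have hET := hE T
  rw [erase_inter]
  by_cases hxyT : x ∈ T ∧ y ∈ T
  · have := card_erase_add_one (mem_inter.2 ⟨hxy, mk_mem_sym2_iff.2 hxyT⟩)
    have := (card_le_card (inter_subset_right (s₁ := T))).trans (card_le_two (a := x) (b := y))
    omega
  · have : #(T ∩ {x, y}) ≤ 1 := card_le_one.2 fun a ha b hb => by
      simp only [mem_inter, mem_insert, mem_singleton] at ha hb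
      grind
    have := card_erase_le (a := s(x, y)) (s := E ∩ T.sym2)
    omega

theorem exists_orientation_of_card_inter_sym2_le_sum (E : Finset (Sym2 α)) (cap : α → ℕ)
    (hE : ∀ T : Finset α, #(E ∩ T.sym2) ≤ ∑ v ∈ T, cap v) :
    ∃ o : Sym2 α → α, (∀ e ∈ E, o e ∈ e) ∧
      ∀ v, #(E.filter (o · = v)) ≤ cap v := by
  let slots : Sym2 α → Finset (Σ _ : α, ℕ) := fun e =>
    e.toFinset.sigma fun x => range (cap x)
  have hHall : ∀ s : Finset E, #s ≤ #(s.biUnion (slots ·.1)) := by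
    intro s
    set T := s.biUnion (·.1.toFinset)
    have hT : s.biUnion (slots ·.1) = T.sigma fun x => range (cap x) := by
      ext ⟨x, i⟩
      simp only [slots, T, mem_biUnion, mem_sigma, Sym2.mem_toFinset]
      grind
    calc #s = #(s.map (Function.Embedding.subtype _)) := (card_map _).symm
      _ ≤ #(E ∩ T.sym2) := card_le_card ?_
      _ ≤ ∑ v ∈ T, cap v := hE T
      _ = #(s.biUnion (slots ·.1)) := by simp [hT, card_sigma]
    intro e he
    obtain ⟨e, hes, rfl⟩ := mem_map.1 he
    exact mem_inter.2
      ⟨e.2, mem_sym2_iff.2 fun x hx => mem_biUnion.2 ⟨e, hes, Sym2.mem_toFinset.2 hx⟩⟩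
  obtain ⟨f, hf, hfs⟩ := (all_card_le_biUnion_card_iff_exists_injective _).1 hHall
  let F : Sym2 α → Σ _ : α, ℕ := fun e =>
    if h : e ∈ E then f ⟨e, h⟩ else ⟨e.out.1, 0⟩
  have hF : ∀ e (he : e ∈ E), F e = f ⟨e, he⟩ := fun e he => dif_pos he
  refine ⟨fun e => (F e).1, fun e he => ?_, fun v => ?_⟩
  · have := hfs ⟨e, he⟩
    rw [← hF e he, mem_sigma, Sym2.mem_toFinset] at this
    exact this.1
  · calc #(E.filter fun e => (F e).1 = v)
        ≤ #(({v} : Finset α).sigma fun x => range (cap x)) := card_le_card_of_injOn F ?_ ?_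
      _ = cap v := by simp
    · intro e he
      obtain ⟨heE, rfl⟩ := mem_filter.1 he
      have := hfs ⟨e, heE⟩
      rw [← hF e heE, mem_sigma] at this
      exact mem_sigma.2 ⟨mem_singleton_self _, this.2⟩
    · intro e₁ he₁ e₂ he₂ h
      rw [hF e₁ (mem_filter.1 he₁).1, hF e₂ (mem_filter.1 he₂).1] at h
      exact congrArg Subtype.val (hf h)

theorem card_filter_eq_of_card_eq_sum {V : Finset α} {E : Finset (Sym2 α)} (hEV : E ⊆ V.sym2)
    {o : Sym2 α → α} (ho : ∀ e ∈ E, o e ∈ e) {cap : α → ℕ}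
    (hle : ∀ v, #(E.filter (o · = v)) ≤ cap v) (hsum : #E = ∑ v ∈ V, cap v) :
    ∀ v ∈ V, #(E.filter (o · = v)) = cap v :=
  (sum_eq_sum_iff_of_le fun v _ => hle v).1 <|
    (card_eq_sum_card_fiberwise fun e he => mem_sym2_iff.1 (hEV he) _ (ho e he)).symm.trans hsum

end

namespace Henneberg

variable {V : Finset ℕ} {E : Finset (Sym2 ℕ)}

theorem subset_sym2 (h : Henneberg V E) : E ⊆ V.sym2 := by
  induction h with
  | triangle a b c => simp [insert_subset_iff]
  | stepI V E _ v u w _ hu hw _ ih =>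
    have := ih.trans (monotone_sym2 (subset_insert v V))
    simp [insert_subset_iff, hu, hw, this]
  | stepII V E _ v a b c _ ha hb hc _ _ _ _ ih =>
    have := (erase_subset s(a, b) E).trans (ih.trans (monotone_sym2 (subset_insert v V)))
    simp [insert_subset_iff, ha, hb, hc, this]

theorem not_isDiag (h : Henneberg V E) : ∀ e ∈ E, ¬ e.IsDiag := by
  induction h with
  | triangle a b c => simp [*]
  | stepI V E _ v u w hv hu hw _ ih =>
    simp_all [(ne_of_mem_of_not_mem hu hv).symm, (ne_of_mem_of_not_mem hw hv).symm]
  | stepII V E _ v a b c hv ha hb hc _ _ _ _ ih =>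
    simp_all [(ne_of_mem_of_not_mem ha hv).symm, (ne_of_mem_of_not_mem hb hv).symm,
      (ne_of_mem_of_not_mem hc hv).symm]

theorem card_edges_add_three (h : Henneberg V E) : #E + 3 = 2 * #V := by
  induction h with
  | triangle a b c hab hac hbc =>
    rw [card_insert_of_notMem, card_pair, card_insert_of_notMem, card_pair] <;>
      simp [*, hab.symm]
  | stepI V E h v u w hv hu hw huw ih =>
    have hE : ∀ x, s(v, x) ∉ E := fun x hx => hv (mk_mem_sym2_iff.1 (h.subset_sym2 hx)).1
    rw [card_insert_of_notMem hv, card_insert_of_notMem, card_insert_of_notMem (hE w)]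
    · omega
    · simp [huw, hE, (ne_of_mem_of_not_mem hw hv).symm]
  | stepII V E h v a b c hv ha hb hc hab hac hbc he ih =>
    have hE : ∀ x, s(v, x) ∉ E := fun x hx => hv (mk_mem_sym2_iff.1 (h.subset_sym2 hx)).1
    rw [card_insert_of_notMem hv, card_insert_of_notMem, card_insert_of_notMem,
      card_insert_of_notMem, card_erase_of_mem he]
    · have := card_pos.2 ⟨_, he⟩; omega
    all_goals simp [*, (ne_of_mem_of_not_mem hb hv).symm, (ne_of_mem_of_not_mem hc hv).symm]

theorem card_inter_sym2_le (h : Henneberg V E) (T : Finset ℕ) :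
    #(E ∩ T.sym2) ≤ 2 * #T - 3 := by
  induction h generalizing T with
  | triangle a b c hab hac hbc =>
    by_cases hT : #T ≤ 2
    · exact card_inter_sym2_le_of_card_le_two (triangle a b c hab hac hbc).not_isDiag hT
    · have : #({s(a, b), s(b, c), s(a, c)} ∩ T.sym2) ≤ 3 :=
        (card_le_card inter_subset_left).trans card_le_three
      omega
  | stepI V E h v u w hv hu hw huw ih =>
    refine card_inter_sym2_le_of_add_vertex hv h.subset_sym2 ih
      (stepI V E h v u w hv hu hw huw).not_isDiag (fun T => ?_) (fun T hvT => ?_) T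
    · have := card_insert_inter_le s(v, u) (insert s(v, w) E) T.sym2
      have := card_insert_inter_le s(v, w) E T.sym2
      omega
    · rw [insert_inter_of_notMem, insert_inter_of_notMem] <;> simp [hvT]
  | stepII V E h v a b c hv ha hb hc hab hac hbc he ih =>
    refine card_inter_sym2_le_of_add_vertex hv h.subset_sym2 ih
      (stepII V E h v a b c hv ha hb hc hab hac hbc he).not_isDiag (fun T => ?_) (fun T hvT => ?_) T
    · have h₁ := card_insert_inter_le s(v, a)
        (insert s(v, b) (insert s(v, c) (E.erase s(a, b)))) T.sym2
      have h₂ := card_insert_inter_le s(v, b) (insert s(v, c) (E.erase s(a, b))) T.sym2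
      have h₃ := card_insert_inter_le s(v, c) (E.erase s(a, b)) T.sym2
      rw [erase_inter] at h₃
      by_cases habT : a ∈ T ∧ b ∈ T
      · have := card_erase_add_one (mem_inter.2 ⟨he, mk_mem_sym2_iff.2 habT⟩)
        omega
      · have := card_erase_le (a := s(a, b)) (s := E ∩ T.sym2)
        rcases not_and_or.1 habT with haT | hbT
        · rw [insert_inter_of_notMem (by simp [haT])]
          omega
        · rw [insert_inter_of_notMem (show s(v, b) ∉ T.sym2 by simp [hbT])] at h₁
          omega
    · rw [insert_inter_of_notMem, insert_inter_of_notMem, insert_inter_of_notMem]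
      · exact card_le_card (inter_subset_inter_right (erase_subset _ _))
      all_goals simp [hvT]

end Henneberg

/-- every Laman graph (on `n ≥ 3` vertices) has exactly `2n − 3`
edges, and after removing one fixed edge `[v₁, v₂]` the remaining edges can be
oriented (`o e` denotes the head of the edge `e`) so that every vertex other
than `v₁` and `v₂` has in-degree exactly `2`, while `v₁` and `v₂` have
in-degree `0`. -/
theorem laman_orientation (V : Finset ℕ) (E : Finset (Sym2 ℕ))
    (h : Henneberg V E) (v₁ v₂ : ℕ) (h₁₂ : v₁ ≠ v₂) (he : s(v₁, v₂) ∈ E) :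
    E.card = 2 * V.card - 3 ∧
      ∃ o : Sym2 ℕ → ℕ,
        (∀ e ∈ E.erase s(v₁, v₂), o e ∈ e) ∧
        (∀ v ∈ V, v ≠ v₁ → v ≠ v₂ →
          ((E.erase s(v₁, v₂)).filter (fun e => o e = v)).card = 2) ∧
        (∀ e ∈ E.erase s(v₁, v₂), o e ≠ v₁ ∧ o e ≠ v₂) := by
  have hEV := h.subset_sym2
  have hcard := h.card_edges_add_three
  obtain ⟨hv₁, hv₂⟩ := mk_mem_sym2_iff.1 (hEV he)
  let cap : ℕ → ℕ := fun v => if v ∈ ({v₁, v₂} : Finset ℕ) then 0 else 2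
  have hHall (T : Finset ℕ) : #(E.erase s(v₁, v₂) ∩ T.sym2) ≤ ∑ v ∈ T, cap v := by
    rw [sum_ite_mem_eq_mul_card_sdiff]
    exact card_erase_inter_sym2_le h.card_inter_sym2_le he T
  obtain ⟨o, ho, hle⟩ := exists_orientation_of_card_inter_sym2_le_sum _ cap hHall
  have heq := card_filter_eq_of_card_eq_sum ((erase_subset _ _).trans hEV) ho hle <| by
    rw [sum_ite_mem_eq_mul_card_sdiff, card_erase_of_mem he,
      card_sdiff_of_subset (insert_subset hv₁ (singleton_subset_iff.2 hv₂)), card_pair h₁₂]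
    omega
  refine ⟨by omega, o, ho, fun v hv hvv₁ hvv₂ => ?_, ?_⟩
  · simpa [cap, hvv₁, hvv₂] using heq v hv
  · have h₁ := hle v₁
    have h₂ := hle v₂
    simp only [cap, mem_insert, mem_singleton, true_or, or_true, if_true, Nat.le_zero,
      card_eq_zero, filter_eq_empty_iff] at h₁ h₂
    exact fun e he => ⟨h₁ he, h₂ he⟩
end

section
/- Every graph obtained from a triangle by a sequence of Henneberg I steps (each step adds one new vertex and two new edges connecting it to two distinct existing vertices) has the Laman property: it has 2n−3 edges on n vertices and every subset of k ≥ 2 vertices spans at most 2k−3 edges. -/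
open scoped Classical

/-- Graphs (given by a vertex set `V ⊆ ℕ` and an edge set `E` of unordered
pairs) obtainable from a triangle by Henneberg I steps only. -/
inductive HennebergI : Finset ℕ → Finset (Sym2 ℕ) → Prop
  | triangle (a b c : ℕ) (hab : a ≠ b) (hac : a ≠ c) (hbc : b ≠ c) :
      HennebergI {a, b, c} {s(a, b), s(b, c), s(a, c)}
  | stepI (V : Finset ℕ) (E : Finset (Sym2 ℕ)) (hVE : HennebergI V E)
      (v u w : ℕ) (hv : v ∉ V) (hu : u ∈ V) (hw : w ∈ V) (huw : u ≠ w) :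
      HennebergI (insert v V) (insert s(v, u) (insert s(v, w) E))

/-! A Henneberg I step adds one vertex and two edges, so `#E + 3 = 2 * #V` is preserved.
For sparsity, a vertex set `S` avoiding the new vertex `v` spans only old edges, while if
`v ∈ S` then `S` spans at most the two new edges besides the old edges spanned by `S \ {v}`;
the induction hypothesis for `S \ {v}` then gives the bound, unless `#S = 2`. Small sets are
handled by looplessness alone: two vertices span at most `choose 2 2 = 1` edge and three at
most `choose 3 2 = 3`, which also settles the triangle. -/

open Finset

section

variable {α : Type*} [DecidableEq α]

theorem Finset.card_filter_not_isDiag_sym2 (s : Finset α) :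
    #{e ∈ s.sym2 | ¬e.IsDiag} = (#s).choose 2 := by
  rw [sym2_eq_image, Sym2.filter_image_mk_not_isDiag, Sym2.card_image_offDiag]

theorem Finset.card_inter_sym2_le_choose_two {E : Finset (Sym2 α)} (hE : ∀ e ∈ E, ¬e.IsDiag)
    (S : Finset α) : #(E ∩ S.sym2) ≤ (#S).choose 2 := by
  rw [← card_filter_not_isDiag_sym2]
  refine card_le_card fun e he => ?_
  rw [mem_inter] at he
  exact mem_filter.2 ⟨he.2, hE e he.1⟩

theorem Finset.filter_forall_mem_eq_inter_sym2 (E : Finset (Sym2 α)) (S : Finset α) :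
    E.filter (fun e => ∀ v ∈ e, v ∈ S) = E ∩ S.sym2 := by
  ext e
  simp [mem_sym2_iff]

def IsLamanSparse (V : Finset α) (E : Finset (Sym2 α)) : Prop :=
  ∀ S ⊆ V, 2 ≤ #S → #(E ∩ S.sym2) + 3 ≤ 2 * #S

theorem isLamanSparse_of_card_le_three {V : Finset α} {E : Finset (Sym2 α)} (hV : #V ≤ 3)
    (hE : ∀ e ∈ E, ¬e.IsDiag) : IsLamanSparse V E := by
  intro S hSV hS
  have hchoose := card_inter_sym2_le_choose_two hE S
  obtain h | h : #S = 2 ∨ #S = 3 := by have := card_le_card hSV; omega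
  all_goals rw [h] at hchoose ⊢; simp [Nat.choose] at hchoose; omega

theorem IsLamanSparse.insert_vertex {V : Finset α} {E : Finset (Sym2 α)} {v u w : α}
    (hsp : IsLamanSparse V E) (hEV : E ⊆ V.sym2) (hv : v ∉ V)
    (hE : ∀ e ∈ insert s(v, u) (insert s(v, w) E), ¬e.IsDiag) :
    IsLamanSparse (insert v V) (insert s(v, u) (insert s(v, w) E)) := by
  intro S hS hS2
  by_cases hvS : v ∈ S
  · obtain hS_two | hS_three : #S = 2 ∨ 3 ≤ #S := by omega
    · have hchoose := card_inter_sym2_le_choose_two hE S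
      rw [hS_two] at hchoose ⊢
      simp [Nat.choose] at hchoose
      omega
    · have hsub : insert s(v, u) (insert s(v, w) E) ∩ S.sym2 ⊆
          insert s(v, u) (insert s(v, w) (E ∩ (S.erase v).sym2)) := by
        intro e he
        obtain ⟨he, heS⟩ := mem_inter.1 he
        simp only [mem_insert] at he ⊢
        refine he.imp_right (Or.imp_right fun heE => mem_inter.2 ⟨heE, ?_⟩)
        rw [mem_sym2_iff] at heS ⊢
        exact fun x hx => mem_erase.2
          ⟨ne_of_mem_of_not_mem (mem_sym2_iff.1 (hEV heE) x hx) hv, heS x hx⟩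
      have hcard := card_erase_of_mem hvS
      have := hsp (S.erase v) (subset_insert_iff.1 hS) (by omega)
      calc #(insert s(v, u) (insert s(v, w) E) ∩ S.sym2) + 3
          ≤ #(E ∩ (S.erase v).sym2) + 2 + 3 := by
            grw [card_le_card hsub, card_insert_le, card_insert_le]
        _ ≤ 2 * #S := by omega
  · have hnew : insert s(v, u) (insert s(v, w) E) ∩ S.sym2 = E ∩ S.sym2 := by
      rw [insert_inter_of_notMem, insert_inter_of_notMem] <;> simp [hvS]
    rw [hnew]
    exact hsp S ((subset_insert_iff_of_notMem hvS).1 hS) hS2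

end

namespace HennebergI

variable {V : Finset ℕ} {E : Finset (Sym2 ℕ)}

theorem subset_sym2 (h : HennebergI V E) : E ⊆ V.sym2 := by
  induction h with
  | triangle a b c => simp [insert_subset_iff]
  | stepI V E _ v u w _ hu hw _ ih =>
    simp only [insert_subset_iff, mk_mem_sym2_iff, mem_insert, true_or, hu, hw, or_true,
      and_self, true_and]
    exact ih.trans (sym2_mono (subset_insert v V))

theorem not_isDiag (h : HennebergI V E) : ∀ e ∈ E, ¬e.IsDiag := by
  induction h with
  | triangle a b c hab hac hbc => simp [hab, hac, hbc]
  | stepI V E _ v u w hv hu hw _ ih =>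
    simp only [forall_mem_insert, Sym2.mk_isDiag_iff]
    exact ⟨(ne_of_mem_of_not_mem hu hv).symm, (ne_of_mem_of_not_mem hw hv).symm, ih⟩

theorem card_add_three (h : HennebergI V E) : #E + 3 = 2 * #V := by
  induction h with
  | triangle a b c hab hac hbc =>
    rw [card_eq_three.2 ⟨a, b, c, hab, hac, hbc, rfl⟩,
      card_eq_three.2 ⟨_, _, _, ?_, ?_, ?_, rfl⟩] <;> simp [hab, hac, hbc, hab.symm]
  | stepI V E hVE v u w hv hu hw huw ih =>
    have hnew (x : ℕ) : s(v, x) ∉ E := fun hx => hv (mk_mem_sym2_iff.1 (hVE.subset_sym2 hx)).1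
    have huv : u ≠ v := ne_of_mem_of_not_mem hu hv
    rw [card_insert_of_notMem hv, card_insert_of_notMem (by simp [hnew, huw, huv]),
      card_insert_of_notMem (hnew w)]
    omega

theorem isLamanSparse (h : HennebergI V E) : IsLamanSparse V E := by
  induction h with
  | triangle a b c hab hac hbc =>
    exact isLamanSparse_of_card_le_three card_le_three (triangle a b c hab hac hbc).not_isDiag
  | stepI V E hVE v u w hv hu hw huw ih =>
    exact ih.insert_vertex hVE.subset_sym2 hv (stepI V E hVE v u w hv hu hw huw).not_isDiag

end HennebergI

/-- every Henneberg I graph has the Laman property: it has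
`2n − 3` edges on `n` vertices, and every subset of `k ≥ 2` vertices spans at
most `2k − 3` edges. -/
theorem hennebergI_laman (V : Finset ℕ) (E : Finset (Sym2 ℕ))
    (h : HennebergI V E) :
    E.card = 2 * V.card - 3 ∧
      ∀ S ⊆ V, 2 ≤ S.card →
        (E.filter (fun e => ∀ v ∈ e, v ∈ S)).card ≤ 2 * S.card - 3 := by
  refine ⟨by have := h.card_add_three; omega, fun S hS hS2 => ?_⟩
  have := h.isLamanSparse S hS hS2
  rw [filter_forall_mem_eq_inter_sym2]
  omega
end

section
/- Up to graph isomorphism, there are exactly two Laman graphs on 6 vertices that are not Henneberg I constructible: the Desargues graph (the 3-prism, i.e. two triangles joined by a perfect matching) and the complete bipartite graph K_{3,3}. -/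
/-!
A Laman graph on `n ≤ 5` vertices has degree sum `4n - 6 < 3n`, so some vertex has degree at
most two, hence exactly two; deleting it leaves a Laman graph, and induction down to the triangle
shows that the graph is Henneberg I. Hence a Laman graph on six vertices that is not Henneberg I
has all degrees at least three, and its degree sum `18` makes it cubic.

A cubic graph on six vertices with a triangle `abc` is the prism: two adjacent vertices have at
most one common neighbour, so the third neighbours `d, e, f` of `a, b, c` are distinct, and each of
them has its two remaining neighbours among the other two. A triangle-free one is `K_{3,3}`: the
neighbours `x, y, z` of a vertex are pairwise non-adjacent, so each is adjacent to the three
vertices outside `{x, y, z}`. Conversely both graphs are Laman and cubic, a cubic graph is not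
Henneberg I because the last vertex added has degree two, and only the prism has a triangle.
-/

open scoped Classical

/-- The Laman property for a graph given by a vertex set `V ⊆ ℕ` and edge set
`E`: edges are non-loops between vertices of `V`, there are `2|V| − 3` edges,
and every subset of `k ≥ 2` vertices spans at most `2k − 3` edges. -/
def Laman (V : Finset ℕ) (E : Finset (Sym2 ℕ)) : Prop :=
  (∀ e ∈ E, ¬ e.IsDiag ∧ ∀ v ∈ e, v ∈ V) ∧
  E.card = 2 * V.card - 3 ∧
  ∀ S ⊆ V, 2 ≤ S.card →
    (E.filter (fun e => ∀ v ∈ e, v ∈ S)).card ≤ 2 * S.card - 3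

/-- Graph isomorphism between two graphs on finite vertex sets in `ℕ`. -/
def GraphIso (V₁ : Finset ℕ) (E₁ : Finset (Sym2 ℕ))
    (V₂ : Finset ℕ) (E₂ : Finset (Sym2 ℕ)) : Prop :=
  ∃ f : ℕ → ℕ, Set.BijOn f (V₁ : Set ℕ) (V₂ : Set ℕ) ∧
    ∀ u ∈ V₁, ∀ w ∈ V₁, (s(u, w) ∈ E₁ ↔ s(f u, f w) ∈ E₂)

/-- The Desargues graph (3-prism): two triangles `{0,1,2}`, `{3,4,5}` joined by
the perfect matching `0-3, 1-4, 2-5`. -/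
def desarguesE : Finset (Sym2 ℕ) :=
  {s(0,1), s(1,2), s(0,2), s(3,4), s(4,5), s(3,5), s(0,3), s(1,4), s(2,5)}

/-- The complete bipartite graph `K_{3,3}` with parts `{0,1,2}` and `{3,4,5}`. -/
def k33E : Finset (Sym2 ℕ) :=
  {s(0,3), s(0,4), s(0,5), s(1,3), s(1,4), s(1,5), s(2,3), s(2,4), s(2,5)}

open Finset

theorem Finset.exists_eq_insert_pair_of_card_eq_three {α : Type*} [DecidableEq α] {s : Finset α}
    {b c : α} (hs : #s = 3) (hb : b ∈ s) (hc : c ∈ s) (hbc : b ≠ c) :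
    ∃ d, d ≠ b ∧ d ≠ c ∧ s = {b, c, d} := by
  have hsd : #(s \ {b, c}) = 1 := by
    rw [card_sdiff_of_subset (by simp [insert_subset_iff, hb, hc]), hs, card_pair hbc]
  obtain ⟨d, hd⟩ := card_eq_one.1 hsd
  have hd' : d ∈ s \ {b, c} := hd ▸ mem_singleton_self d
  simp only [mem_sdiff, mem_insert, mem_singleton, not_or] at hd'
  refine ⟨d, hd'.2.1, hd'.2.2, (eq_of_subset_of_card_le ?_ ?_).symm⟩
  · simp [insert_subset_iff, hb, hc, hd'.1]
  · rw [hs, card_eq_three.2 ⟨b, c, d, hbc, Ne.symm hd'.2.1, Ne.symm hd'.2.2, rfl⟩]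

theorem Sym2.map_injOn {α β : Type*} {f : α → β} {s : Set α} (hf : Set.InjOn f s) :
    Set.InjOn (Sym2.map f) {e | ∀ x ∈ e, x ∈ s} := by
  intro e he e' he' h
  induction e using Sym2.ind with | _ x y =>
  induction e' using Sym2.ind with | _ x' y' =>
  simp only [Set.mem_ofPred_eq, Sym2.mem_iff, forall_eq_or_imp, forall_eq] at he he'
  rw [Sym2.map_mk, Sym2.map_mk, Sym2.eq_iff] at h
  rw [Sym2.eq_iff]
  rcases h with ⟨h1, h2⟩ | ⟨h1, h2⟩
  · exact .inl ⟨hf he.1 he'.1 h1, hf he.2 he'.2 h2⟩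
  · exact .inr ⟨hf he.1 he'.2 h1, hf he.2 he'.1 h2⟩

theorem List.Nodup.bijOn_getD {α : Type*} [DecidableEq α] {l : List α} (hl : l.Nodup) (d : α) :
    Set.BijOn (l.getD · d) ↑(Finset.range l.length) ↑l.toFinset := by
  refine ⟨fun i hi => ?_, fun i hi j hj hij => ?_, fun x hx => ?_⟩
  · simp only [coe_range, Set.mem_Iio] at hi
    simp only [mem_coe, List.mem_toFinset]
    rw [List.getD_eq_getElem _ _ hi]
    exact List.getElem_mem hi
  · simp only [coe_range, Set.mem_Iio] at hi hj
    simp only at hij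
    rwa [List.getD_eq_getElem _ _ hi, List.getD_eq_getElem _ _ hj, hl.getElem_inj_iff] at hij
  · obtain ⟨i, hi, rfl⟩ := List.mem_iff_getElem.1 (List.mem_toFinset.1 hx)
    exact ⟨i, by simpa using hi, List.getD_eq_getElem _ _ hi⟩

def IsGraphOn (V : Finset ℕ) (E : Finset (Sym2 ℕ)) : Prop :=
  ∀ e ∈ E, ¬ e.IsDiag ∧ ∀ v ∈ e, v ∈ V

def neighborFinset (V : Finset ℕ) (E : Finset (Sym2 ℕ)) (v : ℕ) : Finset ℕ :=
  {w ∈ V | s(v, w) ∈ E}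

def HasTriangle (E : Finset (Sym2 ℕ)) : Prop :=
  ∃ a b c, s(a, b) ∈ E ∧ s(b, c) ∈ E ∧ s(a, c) ∈ E

lemma neighborFinset_subset {V : Finset ℕ} {E : Finset (Sym2 ℕ)} {v : ℕ} :
    neighborFinset V E v ⊆ V :=
  filter_subset _ V

lemma isGraphOn_iff {V : Finset ℕ} {E : Finset (Sym2 ℕ)} :
    IsGraphOn V E ↔ ∀ e ∈ E, ¬ e.IsDiag ∧ e ∈ V.sym2 := by
  simp only [IsGraphOn, mem_sym2_iff]

namespace IsGraphOn

variable {V : Finset ℕ} {E : Finset (Sym2 ℕ)} {u v w : ℕ}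

lemma ne (hG : IsGraphOn V E) (h : s(v, w) ∈ E) : v ≠ w :=
  fun hvw => (hG _ h).1 (by simp [hvw])

lemma left_mem (hG : IsGraphOn V E) (h : s(v, w) ∈ E) : v ∈ V :=
  (hG _ h).2 v (Sym2.mem_mk_left v w)

lemma right_mem (hG : IsGraphOn V E) (h : s(v, w) ∈ E) : w ∈ V :=
  (hG _ h).2 w (Sym2.mem_mk_right v w)

lemma mem_neighborFinset (hG : IsGraphOn V E) : w ∈ neighborFinset V E v ↔ s(v, w) ∈ E := by
  simp only [neighborFinset, mem_filter, and_iff_right_iff_imp]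
  exact hG.right_mem

lemma mem_neighborFinset_comm (hG : IsGraphOn V E) :
    w ∈ neighborFinset V E v ↔ v ∈ neighborFinset V E w := by
  rw [hG.mem_neighborFinset, hG.mem_neighborFinset, Sym2.eq_swap]

lemma ne_of_mem_neighborFinset (hG : IsGraphOn V E) (h : w ∈ neighborFinset V E v) : w ≠ v :=
  (hG.ne (hG.mem_neighborFinset.1 h)).symm

lemma filter_mem_eq_image (hG : IsGraphOn V E) (v : ℕ) :
    {e ∈ E | v ∈ e} = (neighborFinset V E v).image (fun w => s(v, w)) := by
  ext e
  simp only [mem_filter, mem_image, hG.mem_neighborFinset]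
  constructor
  · rintro ⟨he, hv⟩
    exact ⟨Sym2.Mem.other hv, by rwa [Sym2.other_spec], Sym2.other_spec hv⟩
  · rintro ⟨w, hw, rfl⟩
    exact ⟨hw, Sym2.mem_mk_left v w⟩

lemma card_filter_mem (hG : IsGraphOn V E) (v : ℕ) :
    #{e ∈ E | v ∈ e} = #(neighborFinset V E v) := by
  rw [hG.filter_mem_eq_image, card_image_of_injective _ fun _ _ => Sym2.congr_right.1]

lemma sum_card_neighborFinset (hG : IsGraphOn V E) :
    ∑ v ∈ V, #(neighborFinset V E v) = 2 * #E := by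
  have hends : ∀ e ∈ E, {v ∈ V | v ∈ e} = e.toFinset := fun e he => by
    ext v
    simp only [mem_filter, Sym2.mem_toFinset, and_iff_right_iff_imp]
    exact (hG e he).2 v
  calc ∑ v ∈ V, #(neighborFinset V E v)
      = ∑ v ∈ V, #{e ∈ E | v ∈ e} := sum_congr rfl fun v _ => (hG.card_filter_mem v).symm
    _ = ∑ e ∈ E, #{v ∈ V | v ∈ e} := sum_card_bipartiteAbove_eq_sum_card_bipartiteBelow _
    _ = ∑ _e ∈ E, 2 := sum_congr rfl fun e he => by
        rw [hends e he, Sym2.card_toFinset_of_not_isDiag e (hG e he).1]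
    _ = 2 * #E := by rw [sum_const, smul_eq_mul, mul_comm]

lemma filter_forall_mem_erase (hG : IsGraphOn V E) (v : ℕ) :
    {e ∈ E | ∀ x ∈ e, x ∈ V.erase v} = {e ∈ E | v ∉ e} :=
  filter_congr fun e he =>
    ⟨fun h hv => notMem_erase v V (h v hv),
     fun h x hx => mem_erase.2 ⟨fun hxv => h (hxv ▸ hx), (hG e he).2 x hx⟩⟩

lemma eq_insert_insert_filter (hG : IsGraphOn V E) (h : neighborFinset V E v = {u, w}) :
    E = insert s(v, u) (insert s(v, w) {e ∈ E | v ∉ e}) := by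
  conv_lhs => rw [← filter_union_filter_not_eq (p := (v ∈ ·)) E, hG.filter_mem_eq_image, h]
  rw [image_insert, image_singleton, insert_union, singleton_union]

lemma eq_triangle {a b c : ℕ} (hG : IsGraphOn {a, b, c} E) (hE : 3 ≤ #E) :
    E = {s(a, b), s(b, c), s(a, c)} := by
  refine eq_of_subset_of_card_le (fun e he => ?_) (hE.trans' card_le_three)
  induction e using Sym2.ind with
  | _ x y =>
    have hx := hG.left_mem he
    have hy := hG.right_mem he
    have hxy := hG.ne he
    simp only [mem_insert, mem_singleton] at hx hy ⊢
    rcases hx with rfl | rfl | rfl <;> rcases hy with rfl | rfl | rfl <;> simp_all [Sym2.eq_swap]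

end IsGraphOn

lemma graphIso_of_bijOn {V W : Finset ℕ} {E T : Finset (Sym2 ℕ)} (φ : ℕ → ℕ)
    (hφ : Set.BijOn φ W V) (hT : IsGraphOn W T) (hcard : #E ≤ #T)
    (hmap : ∀ e ∈ T, e.map φ ∈ E) : GraphIso V E W T := by
  have hinj := Sym2.map_injOn hφ.injOn
  have hE : E = T.image (Sym2.map φ) := by
    refine (eq_of_subset_of_card_le (image_subset_iff.2 hmap) ?_).symm
    rwa [card_image_of_injOn fun e he e' he' => hinj (hT e he).2 (hT e' he').2]
  have hinv := hφ.invOn_invFunOn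
  refine ⟨Function.invFunOn φ W, hφ.symm hinv.symm, fun u hu w hw => ?_⟩
  have hu' := hφ.symm hinv.symm |>.mapsTo hu
  have hw' := hφ.symm hinv.symm |>.mapsTo hw
  conv_lhs => rw [hE, ← hinv.2 hu, ← hinv.2 hw, ← Sym2.map_mk]
  refine ⟨fun h => ?_, fun h => mem_image_of_mem _ h⟩
  obtain ⟨e, he, hme⟩ := mem_image.1 h
  rwa [← hinj (hT e he).2 (by simpa using And.intro hu' hw') hme]

lemma graphIso_of_list {V : Finset ℕ} {E T : Finset (Sym2 ℕ)} (l : List ℕ) (hl : l.Nodup)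
    (hlV : ∀ x ∈ l, x ∈ V) (hV : #V ≤ l.length) (hT : IsGraphOn (range l.length) T)
    (hcard : #E ≤ #T) (hmap : ∀ e ∈ T, e.map (l.getD · 0) ∈ E) :
    GraphIso V E (range l.length) T := by
  have hV : l.toFinset = V := eq_of_subset_of_card_le (fun x hx => hlV x (List.mem_toFinset.1 hx))
    (by rwa [List.toFinset_card_of_nodup hl])
  exact graphIso_of_bijOn _ (hV ▸ hl.bijOn_getD 0) hT hcard hmap

lemma GraphIso.hasTriangle {V V' : Finset ℕ} {E E' : Finset (Sym2 ℕ)} (h : GraphIso V E V' E')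
    (hG : IsGraphOn V E) (hE : HasTriangle E) : HasTriangle E' := by
  obtain ⟨f, -, hf⟩ := h
  obtain ⟨a, b, c, hab, hbc, hac⟩ := hE
  exact ⟨f a, f b, f c, (hf _ (hG.left_mem hab) _ (hG.right_mem hab)).1 hab,
    (hf _ (hG.left_mem hbc) _ (hG.right_mem hbc)).1 hbc,
    (hf _ (hG.left_mem hac) _ (hG.right_mem hac)).1 hac⟩

section

variable {V : Finset ℕ} {E : Finset (Sym2 ℕ)} {v : ℕ}

lemma HennebergI.mem_of_mem (h : HennebergI V E) : ∀ e ∈ E, ∀ x ∈ e, x ∈ V := by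
  induction h with
  | triangle a b c => simp +contextual [or_imp]
  | stepI V E _ v u w _ hu hw _ ih =>
    simp only [mem_insert, forall_eq_or_imp, Sym2.mem_iff, forall_eq, true_or, true_and]
    exact ⟨.inr hu, .inr hw, fun e he x hx => .inr (ih e he x hx)⟩

lemma HennebergI.exists_card_neighborFinset_le_two (h : HennebergI V E) :
    ∃ v ∈ V, #(neighborFinset V E v) ≤ 2 := by
  cases h with
  | triangle a b c hab hac hbc =>
    refine ⟨a, by simp, (card_le_card fun x hx => ?_).trans (card_le_two (a := b) (b := c))⟩
    simp only [neighborFinset, mem_filter, mem_insert, mem_singleton, Sym2.eq_iff] at hx ⊢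
    omega
  | stepI V E hVE v u w hv _ _ _ =>
    refine ⟨v, mem_insert_self v V,
      (card_le_card fun x hx => ?_).trans (card_le_two (a := u) (b := w))⟩
    simp only [neighborFinset, mem_filter, mem_insert, Sym2.congr_right] at hx
    rcases hx.2 with rfl | rfl | hx
    · simp
    · simp
    · exact (hv (hVE.mem_of_mem _ hx v (Sym2.mem_mk_left v x))).elim

lemma Laman.isGraphOn (hL : Laman V E) : IsGraphOn V E := hL.1

lemma Laman.two_le_card_neighborFinset (hL : Laman V E) (hV : 3 ≤ #V) (hv : v ∈ V) :
    2 ≤ #(neighborFinset V E v) := by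
  have hspan := hL.2.2 (V.erase v) (erase_subset v V) (by rw [card_erase_of_mem hv]; omega)
  rw [hL.isGraphOn.filter_forall_mem_erase, card_erase_of_mem hv] at hspan
  have hsplit := card_filter_add_card_filter_not (s := E) (p := (v ∈ ·))
  have hcard := hL.2.1
  rw [hL.isGraphOn.card_filter_mem] at hsplit
  omega

lemma Laman.erase (hL : Laman V E) (hv : v ∈ V) (h2 : #(neighborFinset V E v) = 2) :
    Laman (V.erase v) {e ∈ E | v ∉ e} := by
  have hG := hL.isGraphOn
  obtain ⟨-, hcard, hspan⟩ := hL
  refine ⟨fun e he => ?_, ?_, fun S hS h2S => ?_⟩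
  · rw [← hG.filter_forall_mem_erase] at he
    exact ⟨(hG e (mem_filter.1 he).1).1, (mem_filter.1 he).2⟩
  · have hsplit := card_filter_add_card_filter_not (s := E) (p := (v ∈ ·))
    rw [hG.card_filter_mem, h2] at hsplit
    rw [card_erase_of_mem hv]
    omega
  · rw [filter_filter]
    convert hspan S (hS.trans (erase_subset v V)) h2S using 3 with e
    exact and_iff_right_of_imp fun h hve => notMem_erase v V (hS (h v hve))

lemma Laman.hennebergI_of_erase (hL : Laman V E) (hv : v ∈ V)
    (h2 : #(neighborFinset V E v) = 2) (h : HennebergI (V.erase v) {e ∈ E | v ∉ e}) :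
    HennebergI V E := by
  obtain ⟨u, w, huw, hN⟩ := card_eq_two.1 h2
  have hmem : ∀ x ∈ neighborFinset V E v, x ∈ V.erase v := fun x hx =>
    mem_erase.2 ⟨hL.isGraphOn.ne_of_mem_neighborFinset hx, neighborFinset_subset hx⟩
  have := HennebergI.stepI _ _ h v u w (notMem_erase v V) (hmem u (by simp [hN]))
    (hmem w (by simp [hN])) huw
  rwa [insert_erase hv, ← hL.isGraphOn.eq_insert_insert_filter hN] at this

lemma Laman.exists_card_neighborFinset_le_two (hL : Laman V E) (h1 : 1 ≤ #V) (h5 : #V ≤ 5) :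
    ∃ v ∈ V, #(neighborFinset V E v) ≤ 2 := by
  by_contra! hdeg
  have := card_nsmul_le_sum V _ 3 fun v hv => hdeg v hv
  rw [hL.isGraphOn.sum_card_neighborFinset, hL.2.1, smul_eq_mul] at this
  omega

lemma Laman.hennebergI_of_card_le_five (hL : Laman V E) (h3 : 3 ≤ #V) (h5 : #V ≤ 5) :
    HennebergI V E := by
  induction hn : #V generalizing V E with
  | zero => omega
  | succ n ih =>
    rcases h3.eq_or_lt with h3 | h4
    · obtain ⟨a, b, c, hab, hac, hbc, rfl⟩ := card_eq_three.1 h3.symm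
      rw [hL.isGraphOn.eq_triangle (by rw [hL.2.1, ← h3])]
      exact .triangle a b c hab hac hbc
    · obtain ⟨v, hv, hle⟩ := hL.exists_card_neighborFinset_le_two (by omega) h5
      have h2 := le_antisymm hle (hL.two_le_card_neighborFinset h3 hv)
      refine hL.hennebergI_of_erase hv h2 (ih (hL.erase hv h2) ?_ ?_ ?_) <;>
        rw [card_erase_of_mem hv] <;> omega

lemma Laman.card_neighborFinset_eq_three (hL : Laman V E) (h6 : #V = 6)
    (hHI : ¬ HennebergI V E) : ∀ v ∈ V, #(neighborFinset V E v) = 3 := by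
  have h3 : ∀ v ∈ V, 3 ≤ #(neighborFinset V E v) := fun v hv => by
    have h2 := hL.two_le_card_neighborFinset (by omega) hv
    refine Nat.lt_of_le_of_ne h2 fun h2 => hHI (hL.hennebergI_of_erase hv h2.symm ?_)
    exact (hL.erase hv h2.symm).hennebergI_of_card_le_five
      (by rw [card_erase_of_mem hv]; omega) (by rw [card_erase_of_mem hv]; omega)
  have hsum : ∑ _v ∈ V, 3 = ∑ v ∈ V, #(neighborFinset V E v) := by
    rw [hL.isGraphOn.sum_card_neighborFinset, hL.2.1, sum_const, h6, smul_eq_mul]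
  exact fun v hv => ((sum_eq_sum_iff_of_le h3).1 hsum v hv).symm

end

lemma isGraphOn_desarguesE : IsGraphOn (range 6) desarguesE := by
  rw [isGraphOn_iff]; decide

lemma isGraphOn_k33E : IsGraphOn (range 6) k33E := by
  rw [isGraphOn_iff]; decide

structure IsCubicOn (V : Finset ℕ) (E : Finset (Sym2 ℕ)) : Prop where
  isGraphOn : IsGraphOn V E
  card_neighborFinset : ∀ v ∈ V, #(neighborFinset V E v) = 3

namespace IsCubicOn

variable {V : Finset ℕ} {E : Finset (Sym2 ℕ)}

local notation "𝒩" => neighborFinset V E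

lemma not_hennebergI (hC : IsCubicOn V E) : ¬ HennebergI V E := fun h => by
  obtain ⟨v, hv, h2⟩ := h.exists_card_neighborFinset_le_two
  have := hC.card_neighborFinset v hv
  omega

lemma neighborFinset_eq_triple (hC : IsCubicOn V E) {v x y z : ℕ} (hv : v ∈ V) (hx : x ∈ 𝒩 v)
    (hy : y ∈ 𝒩 v) (hz : z ∈ 𝒩 v) (hxy : x ≠ y) (hxz : x ≠ z) (hyz : y ≠ z) :
    𝒩 v = {x, y, z} :=
  (eq_of_subset_of_card_le (by simp [insert_subset_iff, hx, hy, hz])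
    (by rw [hC.card_neighborFinset v hv, card_eq_three.2 ⟨x, y, z, hxy, hxz, hyz, rfl⟩])).symm

lemma neighborFinset_eq_sdiff (hC : IsCubicOn V E) (h6 : #V = 6) {v a b : ℕ} (hv : v ∈ V)
    (ha : a ∈ V) (hb : b ∈ V) (hab : a ≠ b) (hva : v ≠ a) (hvb : v ≠ b) (hna : a ∉ 𝒩 v)
    (hnb : b ∉ 𝒩 v) : 𝒩 v = V \ {v, a, b} := by
  refine eq_of_subset_of_card_le (fun x hx => ?_) ?_
  · simp only [mem_sdiff, mem_insert, mem_singleton, not_or]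
    exact ⟨neighborFinset_subset hx, hC.isGraphOn.ne_of_mem_neighborFinset hx,
      fun h => hna (h ▸ hx), fun h => hnb (h ▸ hx)⟩
  · rw [hC.card_neighborFinset v hv, card_sdiff_of_subset (by simp [insert_subset_iff, hv, ha, hb]),
      h6, card_eq_three.2 ⟨v, a, b, hva, hvb, hab, rfl⟩]

lemma card_inter_neighborFinset_le_one (hC : IsCubicOn V E) (h6 : #V = 6) {a b : ℕ}
    (hab : s(a, b) ∈ E) : #(𝒩 a ∩ 𝒩 b) ≤ 1 := by
  have hG := hC.isGraphOn
  by_contra! h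
  obtain ⟨c, hc, d, hd, hcd⟩ := one_lt_card.1 h
  rw [mem_inter] at hc hd
  have ha := hG.left_mem hab
  have hb := hG.right_mem hab
  have hne : ∀ {x y}, x ∈ 𝒩 y → x ≠ y := hG.ne_of_mem_neighborFinset
  have hNa : 𝒩 a = {b, c, d} := hC.neighborFinset_eq_triple ha
    (hG.mem_neighborFinset.2 hab) hc.1 hd.1 (hne hc.2).symm (hne hd.2).symm hcd
  have hNb : 𝒩 b = {a, c, d} := hC.neighborFinset_eq_triple hb
    (hG.mem_neighborFinset_comm.1 (hG.mem_neighborFinset.2 hab)) hc.2 hd.2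
    (hne hc.1).symm (hne hd.1).symm hcd
  -- the two vertices outside `{a, b, c, d}` are forced to be adjacent to `c`, giving it degree 4
  have hR : V \ {a, b, c, d} ⊆ 𝒩 c := fun m hm => by
    simp only [mem_sdiff, mem_insert, mem_singleton, not_or] at hm
    obtain ⟨hmV, hma, hmb, hmc, hmd⟩ := hm
    rw [hG.mem_neighborFinset_comm, hC.neighborFinset_eq_sdiff h6 hmV ha hb (hG.ne hab) hma hmb
      (by simp [hG.mem_neighborFinset_comm (v := m), hNa, hmb, hmc, hmd])
      (by simp [hG.mem_neighborFinset_comm (v := m), hNb, hma, hmc, hmd])]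
    simp [neighborFinset_subset hc.1, Ne.symm hmc, hne hc.1, hne hc.2]
  have hsub : insert a (insert b (V \ {a, b, c, d})) ⊆ 𝒩 c := by
    simp [insert_subset_iff, hR, hG.mem_neighborFinset_comm (v := c), hc]
  have hcard := card_le_card hsub
  rw [card_insert_of_notMem (by simp [hG.ne hab]), card_insert_of_notMem (by simp),
    card_sdiff_of_subset (by simp [insert_subset_iff, ha, hb, neighborFinset_subset hc.1,
      neighborFinset_subset hd.1]), h6, card_insert_of_notMem (by simp [hG.ne hab,
      (hne hc.1).symm, (hne hd.1).symm]),
    card_eq_three.2 ⟨_, _, _, (hne hc.2).symm, (hne hd.2).symm, hcd, rfl⟩,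
    hC.card_neighborFinset c (neighborFinset_subset hc.1)] at hcard
  omega

lemma card_eq_nine (hC : IsCubicOn V E) (h6 : #V = 6) : #E = 9 := by
  have := hC.isGraphOn.sum_card_neighborFinset
  rw [sum_congr rfl hC.card_neighborFinset, sum_const, h6, smul_eq_mul] at this
  omega

lemma exists_prism_labelling (hC : IsCubicOn V E) (h6 : #V = 6) {a b c : ℕ} (hab : s(a, b) ∈ E)
    (hbc : s(b, c) ∈ E) (hac : s(a, c) ∈ E) :
    ∃ d e f, [a, b, c, d, e, f].Nodup ∧ 𝒩 a = {b, c, d} ∧ 𝒩 b = {a, c, e} ∧ 𝒩 c = {a, b, f} := by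
  have hG := hC.isGraphOn
  have hN : ∀ {x y}, s(x, y) ∈ E → y ∈ 𝒩 x := hG.mem_neighborFinset.2
  have hN' : ∀ {x y}, s(x, y) ∈ E → x ∈ 𝒩 y := fun h => hG.mem_neighborFinset_comm.1 (hN h)
  obtain ⟨d, hdb, hdc, hNa⟩ := exists_eq_insert_pair_of_card_eq_three
    (hC.card_neighborFinset a (hG.left_mem hab)) (hN hab) (hN hac) (hG.ne hbc)
  obtain ⟨e, hea, hec, hNb⟩ := exists_eq_insert_pair_of_card_eq_three
    (hC.card_neighborFinset b (hG.left_mem hbc)) (hN' hab) (hN hbc) (hG.ne hac)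
  obtain ⟨f, hfa, hfb, hNc⟩ := exists_eq_insert_pair_of_card_eq_three
    (hC.card_neighborFinset c (hG.right_mem hbc)) (hN' hac) (hN' hbc) (hG.ne hab)
  have hda : d ∈ 𝒩 a := by simp [hNa]
  have heb : e ∈ 𝒩 b := by simp [hNb]
  have hfc : f ∈ 𝒩 c := by simp [hNc]
  have hcommon : ∀ {x y z w}, s(x, y) ∈ E → z ∈ 𝒩 x → z ∈ 𝒩 y → w ∈ 𝒩 x → w ∈ 𝒩 y → z = w :=
    fun hxy hzx hzy hwx hwy => card_le_one.1 (hC.card_inter_neighborFinset_le_one h6 hxy) _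
      (mem_inter.2 ⟨hzx, hzy⟩) _ (mem_inter.2 ⟨hwx, hwy⟩)
  have hde : d ≠ e := fun h => hdc (hcommon hab hda (h ▸ heb) (hN hac) (hN hbc))
  have hdf : d ≠ f := fun h => hdb (hcommon hac hda (h ▸ hfc) (hN hab) (hN' hbc))
  have hef : e ≠ f := fun h => hea (hcommon hbc heb (h ▸ hfc) (hN' hab) (hN' hac))
  have := hG.ne hab; have := hG.ne hbc; have := hG.ne hac
  have := hG.ne_of_mem_neighborFinset hda
  have := hG.ne_of_mem_neighborFinset heb
  have := hG.ne_of_mem_neighborFinset hfc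
  refine ⟨d, e, f, ?_, hNa, hNb, hNc⟩
  simp only [List.nodup_cons, List.mem_cons, List.not_mem_nil, or_false, List.nodup_nil,
    and_true, not_or, not_false_eq_true]
  omega

lemma graphIso_desarguesE (hC : IsCubicOn V E) (h6 : #V = 6) {a b c : ℕ} (hab : s(a, b) ∈ E)
    (hbc : s(b, c) ∈ E) (hac : s(a, c) ∈ E) : GraphIso V E (range 6) desarguesE := by
  have hG := hC.isGraphOn
  obtain ⟨d, e, f, hl, hNa, hNb, hNc⟩ := hC.exists_prism_labelling h6 hab hbc hac
  have hne := hl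
  simp only [List.nodup_cons, List.mem_cons, List.not_mem_nil, or_false, List.nodup_nil,
    and_true, not_or, not_false_eq_true] at hne
  have hE : ∀ {x y}, y ∈ 𝒩 x → s(x, y) ∈ E := hG.mem_neighborFinset.1
  have haV := hG.left_mem hab
  have hbV := hG.left_mem hbc
  have hcV := hG.right_mem hbc
  have hdV : d ∈ V := neighborFinset_subset (by simp [hNa] : d ∈ 𝒩 a)
  have heV : e ∈ V := neighborFinset_subset (by simp [hNb] : e ∈ 𝒩 b)
  have hfV : f ∈ V := neighborFinset_subset (by simp [hNc] : f ∈ 𝒩 c)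
  -- `d` is adjacent neither to `b` nor to `c`, whose neighbourhoods are full; likewise `e`
  have hNd : 𝒩 d = V \ {d, b, c} := hC.neighborFinset_eq_sdiff h6 hdV hbV hcV
    (by omega) (by omega) (by omega)
    (by rw [hG.mem_neighborFinset_comm, hNb]; simp only [mem_insert, mem_singleton]; omega)
    (by rw [hG.mem_neighborFinset_comm, hNc]; simp only [mem_insert, mem_singleton]; omega)
  have hNe : 𝒩 e = V \ {e, a, c} := hC.neighborFinset_eq_sdiff h6 heV haV hcV
    (by omega) (by omega) (by omega)
    (by rw [hG.mem_neighborFinset_comm, hNa]; simp only [mem_insert, mem_singleton]; omega)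
    (by rw [hG.mem_neighborFinset_comm, hNc]; simp only [mem_insert, mem_singleton]; omega)
  refine graphIso_of_list [a, b, c, d, e, f] hl (by simp [haV, hbV, hcV, hdV, heV, hfV])
    (by simp [h6]) isGraphOn_desarguesE (by rw [hC.card_eq_nine h6]; rfl) ?_
  simp only [desarguesE, mem_insert, mem_singleton, forall_eq_or_imp, forall_eq, Sym2.map_mk,
    List.getD_cons_zero, List.getD_cons_succ]
  refine ⟨hab, hbc, hac, hE ?_, hE ?_, hE ?_, hE (by simp [hNa]), hE (by simp [hNb]),
    hE (by simp [hNc])⟩ <;>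
  simp only [hNd, hNe, mem_sdiff, mem_insert, mem_singleton, heV, hfV, true_and] <;> omega

lemma neighborFinset_eq_sdiff_neighborFinset (hC : IsCubicOn V E) (h6 : #V = 6)
    (htri : ¬ HasTriangle E) {a x : ℕ} (hx : x ∈ 𝒩 a) : 𝒩 x = V \ 𝒩 a := by
  have hG := hC.isGraphOn
  have hax := hG.mem_neighborFinset.1 hx
  refine eq_of_subset_of_card_le (fun w hw => mem_sdiff.2 ⟨neighborFinset_subset hw, fun hwa =>
    htri ⟨a, x, w, hax, hG.mem_neighborFinset.1 hw, hG.mem_neighborFinset.1 hwa⟩⟩) ?_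
  rw [card_sdiff_of_subset neighborFinset_subset, h6, hC.card_neighborFinset a (hG.left_mem hax),
    hC.card_neighborFinset x (hG.right_mem hax)]

lemma graphIso_k33E (hC : IsCubicOn V E) (h6 : #V = 6) (htri : ¬ HasTriangle E) :
    GraphIso V E (range 6) k33E := by
  have hG := hC.isGraphOn
  obtain ⟨a, ha⟩ : V.Nonempty := card_pos.1 (by omega)
  obtain ⟨x, y, z, hxy, hxz, hyz, hNa⟩ := card_eq_three.1 (hC.card_neighborFinset a ha)
  obtain ⟨p, q, r, hpq, hpr, hqr, hR⟩ := card_eq_three.1 (show #(V \ 𝒩 a) = 3 by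
    rw [card_sdiff_of_subset neighborFinset_subset, h6, hC.card_neighborFinset a ha])
  have hcross : ∀ {u w}, u ∈ V \ 𝒩 a → w ∈ 𝒩 a → s(u, w) ∈ E := fun hu hw => by
    rw [← hC.neighborFinset_eq_sdiff_neighborFinset h6 htri hw, hG.mem_neighborFinset_comm,
      hG.mem_neighborFinset] at hu
    exact hu
  have hl : ([p, q, r] ++ [x, y, z]).Nodup := List.nodup_append.2 ⟨by simp [hpq, hpr, hqr],
    by simp [hxy, hxz, hyz], fun u hu w hw huw => by
      have hu : u ∈ V \ 𝒩 a := by simp only [hR]; simpa using hu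
      have hw : w ∈ 𝒩 a := by simp only [hNa]; simpa using hw
      exact (mem_sdiff.1 hu).2 (huw ▸ hw)⟩
  have hp : p ∈ V \ 𝒩 a := by simp [hR]
  have hq : q ∈ V \ 𝒩 a := by simp [hR]
  have hr : r ∈ V \ 𝒩 a := by simp [hR]
  have hx : x ∈ 𝒩 a := by simp [hNa]
  have hy : y ∈ 𝒩 a := by simp [hNa]
  have hz : z ∈ 𝒩 a := by simp [hNa]
  refine graphIso_of_list [p, q, r, x, y, z] hl (by simp [(mem_sdiff.1 hp).1,
    (mem_sdiff.1 hq).1, (mem_sdiff.1 hr).1, neighborFinset_subset hx, neighborFinset_subset hy,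
    neighborFinset_subset hz]) (by simp [h6]) isGraphOn_k33E (by rw [hC.card_eq_nine h6]; rfl) ?_
  simp only [k33E, mem_insert, mem_singleton, forall_eq_or_imp, forall_eq, Sym2.map_mk,
    List.getD_cons_zero, List.getD_cons_succ]
  exact ⟨hcross hp hx, hcross hp hy, hcross hp hz, hcross hq hx, hcross hq hy, hcross hq hz,
    hcross hr hx, hcross hr hy, hcross hr hz⟩

end IsCubicOn

-- `Laman` selects spanned edges with a classical decidability instance, which `decide` cannot
-- evaluate.
lemma laman_iff {V : Finset ℕ} {E : Finset (Sym2 ℕ)} :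
    Laman V E ↔ IsGraphOn V E ∧ #E = 2 * #V - 3 ∧
      ∀ S ∈ V.powerset, 2 ≤ #S → #(E ∩ S.sym2) ≤ 2 * #S - 3 := by
  have hspan : ∀ S : Finset ℕ, {e ∈ E | ∀ v ∈ e, v ∈ S} = E ∩ S.sym2 := fun S => by
    rw [← filter_mem_eq_inter]
    exact filter_congr fun e _ => mem_sym2_iff.symm
  simp only [Laman, IsGraphOn, mem_powerset, hspan]

lemma laman_desarguesE : Laman (range 6) desarguesE := by
  rw [laman_iff, isGraphOn_iff]; decide

lemma laman_k33E : Laman (range 6) k33E := by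
  rw [laman_iff, isGraphOn_iff]; decide

lemma isCubicOn_desarguesE : IsCubicOn (range 6) desarguesE :=
  ⟨isGraphOn_desarguesE, by decide⟩

lemma isCubicOn_k33E : IsCubicOn (range 6) k33E :=
  ⟨isGraphOn_k33E, by decide⟩

lemma hasTriangle_desarguesE : HasTriangle desarguesE :=
  ⟨0, 1, 2, by decide, by decide, by decide⟩

lemma not_hasTriangle_k33E : ¬ HasTriangle k33E := by
  rintro ⟨a, b, c, hab, hbc, hac⟩
  have key : ∀ a ∈ range 6, ∀ b ∈ range 6, ∀ c ∈ range 6,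
      ¬ (s(a, b) ∈ k33E ∧ s(b, c) ∈ k33E ∧ s(a, c) ∈ k33E) := by decide
  exact key a (isGraphOn_k33E.left_mem hab) b (isGraphOn_k33E.left_mem hbc) c
    (isGraphOn_k33E.right_mem hbc) ⟨hab, hbc, hac⟩

/-- up to graph isomorphism there are exactly two Laman graphs on
`6` vertices that are not Henneberg I constructible, namely the Desargues graph
and `K_{3,3}`. -/
theorem laman_six_vertices_classification :
    (∀ V E, V.card = 6 → Laman V E → ¬ HennebergI V E →
      (GraphIso V E {0,1,2,3,4,5} desarguesE ∨ GraphIso V E {0,1,2,3,4,5} k33E)) ∧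
    Laman {0,1,2,3,4,5} desarguesE ∧ ¬ HennebergI {0,1,2,3,4,5} desarguesE ∧
    Laman {0,1,2,3,4,5} k33E ∧ ¬ HennebergI {0,1,2,3,4,5} k33E ∧
    ¬ GraphIso {0,1,2,3,4,5} desarguesE {0,1,2,3,4,5} k33E := by
  refine ⟨fun V E h6 hL hHI => ?_, laman_desarguesE, isCubicOn_desarguesE.not_hennebergI,
    laman_k33E, isCubicOn_k33E.not_hennebergI, fun h => not_hasTriangle_k33E
      (h.hasTriangle isGraphOn_desarguesE hasTriangle_desarguesE)⟩
  have hC : IsCubicOn V E := ⟨hL.isGraphOn, hL.card_neighborFinset_eq_three h6 hHI⟩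
  by_cases htri : HasTriangle E
  · obtain ⟨a, b, c, hab, hbc, hac⟩ := htri
    exact .inl (hC.graphIso_desarguesE h6 hab hbc hac)
  · exact .inr (hC.graphIso_k33E h6 htri)
end
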